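/- Fix an integer d ≥ 2 and α with 1/2 ≤ α < 1/2 + 1/(2d) (and α ≤ 1), and let ρ_W be the Werner state with parameter α on ℂ^d ⊗ ℂ^d. Then 0 < Tr[(ρ_W^{T_A})³] < Tr[ρ_W³], both traces being real. -/

import Mathlib

/-- Partial transpose on the `A` factor:
`(X^{T_A})_{(a,b),(a',b')} = X_{(a',b),(a,b')}`. -/
def partialTransposeA {A B : Type*} (X : Matrix (A × B) (A × B) ℂ) :
    Matrix (A × B) (A × B) ℂ :=
  fun p q => X (q.1, p.2) (p.1, q.2)

/-- The swap matrix on `ℂ^d ⊗ ℂ^d`: `S_{(i,j),(k,l)} = δ_{i,l} δ_{j,k}`. -/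
def swapMatrix (d : ℕ) : Matrix (Fin d × Fin d) (Fin d × Fin d) ℂ :=
  fun p q => if p.1 = q.2 ∧ p.2 = q.1 then 1 else 0

/-- The projector `Π₊ = (I + S)/2` onto the symmetric subspace. -/
noncomputable def symProj (d : ℕ) : Matrix (Fin d × Fin d) (Fin d × Fin d) ℂ :=
  (2 : ℂ)⁻¹ • (1 + swapMatrix d)

/-- The projector `Π₋ = (I − S)/2` onto the antisymmetric subspace. -/
noncomputable def antisymProj (d : ℕ) : Matrix (Fin d × Fin d) (Fin d × Fin d) ℂ :=
  (2 : ℂ)⁻¹ • (1 - swapMatrix d)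

/-- The Werner state with parameter `α`:
`ρ_W = α·Π₊/(d(d+1)/2) + (1−α)·Π₋/(d(d−1)/2)`. -/
noncomputable def wernerState (d : ℕ) (α : ℝ) :
    Matrix (Fin d × Fin d) (Fin d × Fin d) ℂ :=
  ((α : ℂ) / ((d : ℂ) * ((d : ℂ) + 1) / 2)) • symProj d +
    (((1 - α : ℝ) : ℂ) / ((d : ℂ) * ((d : ℂ) - 1) / 2)) • antisymProj d

/-- The projector onto the maximally entangled state:
`(Δ₀)_{(i,j),(k,l)} = δ_{i,j} δ_{k,l} / d`. -/
noncomputable def maxEntProj (d : ℕ) : Matrix (Fin d × Fin d) (Fin d × Fin d) ℂ :=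
  fun p q => (if p.1 = p.2 ∧ q.1 = q.2 then 1 else 0) / (d : ℂ)

/-!
`ρ_W = a Π₊ + b Π₋` is a combination of the complementary orthogonal projectors `Π₊, Π₋`, and,
since the partial transpose of the swap is `d` times the projector `P` onto the maximally
entangled vector, `ρ_W^{T_A} = c (1 - P) + (t / d) P` with `t = 2α - 1` and
`c = (d - t) / (d (d² - 1))`. Cubing a combination of complementary orthogonal idempotents cubes
its coefficients, so both traces are explicit rational functions of `d` and `α`; their difference
is `(1 - t d)³ / (d (d² - 1))²`, which is positive exactly when `α < 1/2 + 1/(2d)`.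
-/

open Matrix

section OrthogonalIdempotents

variable {R A : Type*} [CommSemiring R] [Ring A] [Algebra R A]

theorem smul_add_smul_pow_of_add_eq_one {P Q : A} (hsum : P + Q = 1) (hPQ : P * Q = 0)
    (a b : R) (n : ℕ) : (a • P + b • Q) ^ n = a ^ n • P + b ^ n • Q := by
  obtain ⟨hP, hQ⟩ := IsIdempotentElem.of_mul_add hPQ hsum
  have hQP : Q * P = 0 := by
    rw [← sub_eq_of_eq_add' hsum.symm]
    exact hP.one_sub_mul_self
  induction n with
  | zero => simp [hsum]
  | succ n ih =>
    rw [pow_succ, ih]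
    simp only [add_mul, mul_add, smul_mul_smul_comm, hP.eq, hQ.eq, hPQ, hQP, smul_zero,
      add_zero, zero_add, pow_succ]

end OrthogonalIdempotents

theorem trace_smul_add_smul_pow_of_add_eq_one {n R : Type*} [Fintype n] [DecidableEq n]
    [CommRing R] {P Q : Matrix n n R} (hsum : P + Q = 1) (hPQ : P * Q = 0) (a b : R) (k : ℕ) :
    ((a • P + b • Q) ^ k).trace = a ^ k * P.trace + b ^ k * Q.trace := by
  rw [smul_add_smul_pow_of_add_eq_one hsum hPQ, trace_add, trace_smul, trace_smul,
    smul_eq_mul, smul_eq_mul]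

section PartialTranspose

variable {A B : Type*}

theorem partialTransposeA_add (X Y : Matrix (A × B) (A × B) ℂ) :
    partialTransposeA (X + Y) = partialTransposeA X + partialTransposeA Y := rfl

theorem partialTransposeA_smul (c : ℂ) (X : Matrix (A × B) (A × B) ℂ) :
    partialTransposeA (c • X) = c • partialTransposeA X := rfl

theorem partialTransposeA_sub (X Y : Matrix (A × B) (A × B) ℂ) :
    partialTransposeA (X - Y) = partialTransposeA X - partialTransposeA Y := rfl

theorem partialTransposeA_one [DecidableEq A] [DecidableEq B] :
    partialTransposeA (1 : Matrix (A × B) (A × B) ℂ) = 1 := by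
  ext ⟨a, b⟩ ⟨a', b'⟩
  simp only [partialTransposeA, one_apply, Prod.mk.injEq]
  grind

end PartialTranspose

noncomputable def wernerTraceCube (d α : ℝ) : ℝ :=
  4 * (α ^ 3 / (d + 1) ^ 2 + (1 - α) ^ 3 / (d - 1) ^ 2) / d ^ 2

noncomputable def wernerPartialTransposeTraceCube (d α : ℝ) : ℝ :=
  ((d - (2 * α - 1)) ^ 3 / (d ^ 2 - 1) ^ 2 + (2 * α - 1) ^ 3) / d ^ 3

section Werner

variable (d : ℕ)

theorem swapMatrix_mul_self : swapMatrix d * swapMatrix d = 1 := by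
  ext ⟨i, j⟩ ⟨k, l⟩
  simp [swapMatrix, mul_apply, Fintype.sum_prod_type, one_apply, ite_and, and_comm, eq_comm]

theorem trace_swapMatrix : (swapMatrix d).trace = d := by
  simp [trace, swapMatrix, Fintype.sum_prod_type, ite_and]

theorem symProj_add_antisymProj : symProj d + antisymProj d = 1 := by
  unfold symProj antisymProj
  module

theorem symProj_mul_antisymProj : symProj d * antisymProj d = 0 := by
  simp only [symProj, antisymProj, smul_mul_smul_comm, add_mul, mul_sub, one_mul, mul_one,
    swapMatrix_mul_self]
  module

theorem trace_symProj : (symProj d).trace = d * (d + 1) / 2 := by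
  rw [symProj, trace_smul, trace_add, trace_one, trace_swapMatrix]
  simp only [Fintype.card_prod, Fintype.card_fin, smul_eq_mul]
  push_cast
  ring

theorem trace_antisymProj : (antisymProj d).trace = d * (d - 1) / 2 := by
  rw [antisymProj, trace_smul, trace_sub, trace_one, trace_swapMatrix]
  simp only [Fintype.card_prod, Fintype.card_fin, smul_eq_mul]
  push_cast
  ring

theorem isIdempotentElem_maxEntProj : IsIdempotentElem (maxEntProj d) := by
  rcases eq_or_ne d 0 with rfl | hd
  · exact Subsingleton.elim _ _
  ext ⟨i, j⟩ ⟨k, l⟩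
  simp only [maxEntProj, mul_apply, Fintype.sum_prod_type, div_mul_div_comm, ← Finset.sum_div]
  by_cases hij : i = j <;> by_cases hkl : k = l <;> simp [hij, hkl]

theorem trace_maxEntProj (hd : d ≠ 0) : (maxEntProj d).trace = 1 := by
  have hd' : (d : ℂ) ≠ 0 := Nat.cast_ne_zero.mpr hd
  simp only [trace, diag, maxEntProj, Fintype.sum_prod_type, and_self, ← Finset.sum_div]
  simp [hd']

theorem trace_one_sub_maxEntProj (hd : d ≠ 0) : (1 - maxEntProj d).trace = d ^ 2 - 1 := by
  rw [trace_sub, trace_one, trace_maxEntProj d hd]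
  simp [sq]

theorem partialTransposeA_swapMatrix :
    partialTransposeA (swapMatrix d) = (d : ℂ) • maxEntProj d := by
  rcases eq_or_ne d 0 with rfl | hd
  · exact Subsingleton.elim _ _
  ext ⟨i, j⟩ ⟨k, l⟩
  have hd' : (d : ℂ) ≠ 0 := Nat.cast_ne_zero.mpr hd
  simp only [partialTransposeA, swapMatrix, maxEntProj, Matrix.smul_apply, smul_eq_mul,
    mul_div_cancel₀ _ hd']
  grind

theorem trace_wernerState_pow_three (hd : 2 ≤ d) (α : ℝ) :
    ((wernerState d α) ^ 3).trace = wernerTraceCube d α := by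
  have hd0 : (d : ℂ) ≠ 0 := by norm_cast; omega
  have hdm : (d : ℂ) - 1 ≠ 0 := by
    rw [sub_ne_zero]; norm_cast; omega
  have hdp : (d : ℂ) + 1 ≠ 0 := by norm_cast
  rw [wernerState, trace_smul_add_smul_pow_of_add_eq_one (symProj_add_antisymProj d)
    (symProj_mul_antisymProj d), trace_symProj, trace_antisymProj, wernerTraceCube]
  push_cast
  field_simp
  ring

theorem partialTransposeA_wernerState (hd : 2 ≤ d) (α : ℝ) :
    partialTransposeA (wernerState d α) =
      (((d - (2 * α - 1)) / (d * (d ^ 2 - 1)) : ℝ) : ℂ) • (1 - maxEntProj d) +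
        (((2 * α - 1) / d : ℝ) : ℂ) • maxEntProj d := by
  have hd0 : (d : ℂ) ≠ 0 := by norm_cast; omega
  have hdm : (d : ℂ) - 1 ≠ 0 := by
    rw [sub_ne_zero]; norm_cast; omega
  have hdp : (d : ℂ) + 1 ≠ 0 := by norm_cast
  have hdsq : (d : ℂ) ^ 2 - 1 ≠ 0 := by
    rw [sub_ne_zero]; norm_cast; nlinarith
  simp only [wernerState, symProj, antisymProj, partialTransposeA_add, partialTransposeA_smul,
    partialTransposeA_sub, partialTransposeA_one, partialTransposeA_swapMatrix]
  push_cast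
  match_scalars <;> field_simp <;> ring

theorem trace_partialTransposeA_wernerState_pow_three (hd : 2 ≤ d) (α : ℝ) :
    ((partialTransposeA (wernerState d α)) ^ 3).trace = wernerPartialTransposeTraceCube d α := by
  have hd0 : (d : ℂ) ≠ 0 := by norm_cast; omega
  have hdsq : (d : ℂ) ^ 2 - 1 ≠ 0 := by
    rw [sub_ne_zero]; norm_cast; nlinarith
  rw [partialTransposeA_wernerState d hd, trace_smul_add_smul_pow_of_add_eq_one
    (sub_add_cancel 1 _) (isIdempotentElem_maxEntProj d).one_sub_mul_self,
    trace_one_sub_maxEntProj d (by omega), trace_maxEntProj d (by omega),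
    wernerPartialTransposeTraceCube]
  push_cast
  field_simp

end Werner

theorem wernerTraceCube_sub_wernerPartialTransposeTraceCube {d : ℝ} (hd : 1 < d) (α : ℝ) :
    wernerTraceCube d α - wernerPartialTransposeTraceCube d α =
      (1 - (2 * α - 1) * d) ^ 3 / (d * (d ^ 2 - 1)) ^ 2 := by
  have hd0 : d ≠ 0 := by positivity
  have hdm : d - 1 ≠ 0 := by linarith
  have hdp : d + 1 ≠ 0 := by linarith
  have hdsq : d ^ 2 - 1 ≠ 0 := by nlinarith
  rw [wernerTraceCube, wernerPartialTransposeTraceCube]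
  field_simp
  ring

theorem wernerPartialTransposeTraceCube_pos {d α : ℝ} (hd : 1 < d) (hα₁ : 1 / 2 ≤ α)
    (hα₂ : 2 * α - 1 < d) : 0 < wernerPartialTransposeTraceCube d α := by
  have hdsq : 0 < d ^ 2 - 1 := by nlinarith
  have ht : 0 ≤ 2 * α - 1 := by linarith
  have hdt : 0 < d - (2 * α - 1) := by linarith
  unfold wernerPartialTransposeTraceCube
  positivity

theorem wernerPartialTransposeTraceCube_lt_wernerTraceCube {d α : ℝ} (hd : 1 < d)
    (hα : (2 * α - 1) * d < 1) : wernerPartialTransposeTraceCube d α < wernerTraceCube d α := by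
  have hdsq : 0 < d ^ 2 - 1 := by nlinarith
  have hgap : 0 < 1 - (2 * α - 1) * d := by linarith
  rw [← sub_pos, wernerTraceCube_sub_wernerPartialTransposeTraceCube hd]
  exact div_pos (pow_pos hgap 3) (pow_pos (mul_pos (by linarith) hdsq) 2)

theorem wernerState_R3_positive_general (d : ℕ) (hd : 2 ≤ d) (α : ℝ)
    (hα₁ : 1 / 2 ≤ α) (hα₂ : α < 1 / 2 + 1 / (2 * d)) :
    ∃ p₃ s₃ : ℝ,
      ((partialTransposeA (wernerState d α)) ^ 3).trace = (p₃ : ℂ) ∧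
      ((wernerState d α) ^ 3).trace = (s₃ : ℂ) ∧
      0 < p₃ ∧ p₃ < s₃ := by
  have hd' : (1 : ℝ) < d := by exact_mod_cast hd
  have hαd : (2 * α - 1) * d < 1 := by
    rw [← sub_lt_iff_lt_add', lt_div_iff₀ (by positivity)] at hα₂
    linarith
  refine ⟨_, _, trace_partialTransposeA_wernerState_pow_three d hd α,
    trace_wernerState_pow_three d hd α, wernerPartialTransposeTraceCube_pos hd' hα₁ ?_,
    wernerPartialTransposeTraceCube_lt_wernerTraceCube hd' hαd⟩
  nlinarith

/-- **`R₃` can be positive on separable Werner states.**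
For `d ≥ 2` and `1/2 ≤ α < 1/2 + 1/(2d)` (with `α ≤ 1`), the (separable) Werner
state satisfies `0 < Tr[(ρ_W^{T_A})³] < Tr[ρ_W³]`, both traces being real. -/
theorem wernerState_R3_positive (d : ℕ) (hd : 2 ≤ d) (α : ℝ)
    (hα₁ : 1 / 2 ≤ α) (hα₂ : α < 1 / 2 + 1 / (2 * d)) (hα₃ : α ≤ 1) :
    ∃ p₃ s₃ : ℝ,
      ((partialTransposeA (wernerState d α)) ^ 3).trace = (p₃ : ℂ) ∧
      ((wernerState d α) ^ 3).trace = (s₃ : ℂ) ∧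
      0 < p₃ ∧ p₃ < s₃ :=
  wernerState_R3_positive_general d hd α hα₁ hα₂
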